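/- arXiv:2203.09455 — 3 statements merged into one kernel-verified Lean document; each statement's English description precedes it below -/
import Mathlib

section
/- Let p ≥ 3, h ≥ 2, N ≥ 1 be natural numbers, set |v_i| = 2(p^i - 1), and let t = 2h + ∑_{i=1}^{h-1} d_i·|v_i| - p^N·|v_h|/(p-1) where 1 ≤ d_i ≤ p^N for all i. Then t is not congruent to 0 modulo p^N·|v_h| and t is not congruent to 2p - 2 modulo p^N·|v_h|. -/
/-!
Write `σ = 1 + p + ⋯ + p^(h-1)` and `M = p^N |v_h| = 2 p^N (p - 1) σ`, so that the division in `t` is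
exact and `t = 2h + ∑ d_i |v_i| - 2 p^N σ`. Since `∑_{0<i<h} |v_i| = 2(σ - h)`, the bounds on `d_i` give
`2h(1 - p^N) ≥ t ≥ 2σ(1 - p^N) > 2p - 2 - M`, so both `0` and `2p - 2` lie strictly between `t` and
`t + M`; no integer in that open interval is congruent to `t` modulo `M`.
-/

open Finset

theorem Int.not_modEq_of_sub_pos_of_sub_lt {n a b : ℤ} (hpos : 0 < b - a) (hlt : b - a < n) :
    ¬ a ≡ b [ZMOD n] :=
  fun H => hpos.ne' (Int.eq_zero_of_dvd_of_nonneg_of_lt hpos.le hlt H.dvd)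

theorem mul_pow_sub_one_ediv_sub_one {p : ℤ} (hp : p ≠ 1) (c : ℤ) (h : ℕ) :
    c * (p ^ h - 1) / (p - 1) = c * ∑ i ∈ range h, p ^ i := by
  rw [← mul_geom_sum, mul_left_comm, Int.mul_ediv_cancel_left _ (sub_ne_zero.mpr hp)]

theorem sum_Icc_pow_sub_one {R : Type*} [CommRing R] (p : R) {h : ℕ} (hh : 1 ≤ h) :
    ∑ i ∈ Icc 1 (h - 1), (p ^ i - 1) = ∑ i ∈ range h, p ^ i - h := by
  have hIcc : Icc 1 (h - 1) = Ico 1 h := by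
    ext i; simp only [mem_Icc, mem_Ico]; omega
  rw [hIcc, sum_sub_distrib, range_eq_Ico, sum_eq_sum_Ico_succ_bot (by omega : 0 < h)]
  simp only [pow_zero, sum_const, Nat.card_Ico, nsmul_eq_mul, mul_one]
  push_cast [Nat.cast_sub hh]
  ring

theorem add_one_le_sum_range_pow {p : ℤ} (hp : 0 ≤ p) {h : ℕ} (hh : 2 ≤ h) :
    p + 1 ≤ ∑ i ∈ range h, p ^ i := by
  calc p + 1 = ∑ i ∈ range 2, p ^ i := by simp [sum_range_succ, add_comm]
    _ ≤ ∑ i ∈ range h, p ^ i :=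
      sum_le_sum_of_subset_of_nonneg (range_subset_range.2 hh) fun i _ _ => pow_nonneg hp i

theorem sum_le_sum_mul_le_mul_sum {ι : Type*} {s : Finset ι} {d w : ι → ℤ} {c : ℤ}
    (hd : ∀ i ∈ s, 1 ≤ d i ∧ d i ≤ c) (hw : ∀ i ∈ s, 0 ≤ w i) :
    ∑ i ∈ s, w i ≤ ∑ i ∈ s, d i * w i ∧ ∑ i ∈ s, d i * w i ≤ c * ∑ i ∈ s, w i := by
  refine ⟨sum_le_sum fun i hi => le_mul_of_one_le_left (hw i hi) (hd i hi).1, ?_⟩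
  rw [mul_sum]
  exact sum_le_sum fun i hi => mul_le_mul_of_nonneg_right (hd i hi).2 (hw i hi)

theorem stmt_8 (p h N : ℕ) (hp : 3 ≤ p) (hh : 2 ≤ h) (hN : 1 ≤ N)
    (d : ℕ → ℤ) (hd : ∀ i ∈ Finset.Icc 1 (h - 1), 1 ≤ d i ∧ d i ≤ (p : ℤ) ^ N) :
    ¬ Int.ModEq ((p : ℤ) ^ N * (2 * ((p : ℤ) ^ h - 1)))
        (2 * h + (∑ i ∈ Finset.Icc 1 (h - 1), d i * (2 * ((p : ℤ) ^ i - 1))) -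
          (p : ℤ) ^ N * (2 * ((p : ℤ) ^ h - 1)) / ((p : ℤ) - 1)) 0 ∧
      ¬ Int.ModEq ((p : ℤ) ^ N * (2 * ((p : ℤ) ^ h - 1)))
        (2 * h + (∑ i ∈ Finset.Icc 1 (h - 1), d i * (2 * ((p : ℤ) ^ i - 1))) -
          (p : ℤ) ^ N * (2 * ((p : ℤ) ^ h - 1)) / ((p : ℤ) - 1)) (2 * p - 2) := by
  set σ := ∑ i ∈ range h, (p : ℤ) ^ i
  have hp' : (3 : ℤ) ≤ p := by exact_mod_cast hp
  have hh' : (2 : ℤ) ≤ h := by exact_mod_cast hh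
  have hσ : (p : ℤ) + 1 ≤ σ := add_one_le_sum_range_pow (by positivity) hh
  have hpN : (3 : ℤ) ≤ (p : ℤ) ^ N := hp'.trans (le_self_pow₀ (by linarith) (by omega))
  have hM : (p : ℤ) ^ N * (2 * ((p : ℤ) ^ h - 1)) = 2 * (p : ℤ) ^ N * ((p : ℤ) - 1) * σ := by
    rw [← mul_geom_sum (p : ℤ) h]; ring
  have hdiv : (p : ℤ) ^ N * (2 * ((p : ℤ) ^ h - 1)) / ((p : ℤ) - 1) = 2 * (p : ℤ) ^ N * σ := by
    rw [← mul_assoc, mul_pow_sub_one_ediv_sub_one (by omega)]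
    ring
  have hweights : ∑ i ∈ Icc 1 (h - 1), 2 * ((p : ℤ) ^ i - 1) = 2 * (σ - h) := by
    rw [← mul_sum, sum_Icc_pow_sub_one _ (by omega)]
  obtain ⟨hS_lo, hS_hi⟩ := sum_le_sum_mul_le_mul_sum hd fun i _ =>
    mul_nonneg zero_le_two (sub_nonneg.mpr (one_le_pow₀ (by linarith : (1 : ℤ) ≤ p)))
  rw [hweights] at hS_lo hS_hi
  rw [hdiv, hM]
  set S := ∑ i ∈ Icc 1 (h - 1), d i * (2 * ((p : ℤ) ^ i - 1))
  have ht_neg : 2 * h + S - 2 * (p : ℤ) ^ N * σ < 0 := by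
    nlinarith [mul_pos (by linarith : (0 : ℤ) < (p : ℤ) ^ N - 1) (by linarith : (0 : ℤ) < h)]
  have ht_gt :
      2 * p - 2 - 2 * (p : ℤ) ^ N * ((p : ℤ) - 1) * σ < 2 * h + S - 2 * (p : ℤ) ^ N * σ := by
    nlinarith [mul_pos (by linarith : (0 : ℤ) < (p : ℤ) ^ N) (by linarith : (0 : ℤ) < σ)]
  constructor <;> apply Int.not_modEq_of_sub_pos_of_sub_lt <;> linarith
end

section
/- Define a_{h,N} for h ≥ 2 by the recursion a_{h,0} = 1, a_{h,1} = p, and for N > 1: a_{h,N} = p·a_{h,N-1} if N ≢ 1 (mod h-1), and a_{h,N} = p·a_{h,N-1} + p - 1 if N ≡ 1 (mod h-1). Then for N ≥ 1, a_{h,N} = p^N + (p-1)(p^{N-1} - p^{r-1})/(p^{h-1} - 1), where r is the unique integer with 1 ≤ r ≤ h-1 and N ≡ r (mod h-1). -/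
/-!
With `m = h - 1` and `b n = a (n + 1)`, the recursion reads
`b (n + 1) = p * b n + [m ∣ n + 1] (p - 1)`. Clearing the denominator, the claim becomes
`b n (p ^ m - 1) = p ^ (n + 1) (p ^ m - 1) + (p - 1) (p ^ n - p ^ (n % m))`, which follows by a
one-step induction: multiplying `p ^ (n % m)` by `p` gives `p ^ ((n + 1) % m)` except when
`m ∣ n + 1`, where the exponent wraps around from `m` to `0`, leaving an excess of exactly
`p ^ m - 1`; the extra summand `p - 1` of the recursion pays for it.
-/

theorem Nat.mod_add_one_eq (k m : ℕ) :
    k % m + 1 = (k + 1) % m + if m ∣ k + 1 then m else 0 := by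
  rcases Nat.eq_zero_or_pos m with rfl | hm
  · simp
  rcases Nat.lt_or_ge (k % m + 1) m with hlt | hge
  · have hmod : (k + 1) % m = k % m + 1 := by
      rw [Nat.add_mod_of_add_mod_lt (by rwa [Nat.mod_eq_of_lt (by omega : 1 < m)]),
        Nat.mod_eq_of_lt (by omega : 1 < m)]
    rw [hmod, if_neg (by simp [Nat.dvd_iff_mod_eq_zero, hmod])]
  · have hlast : k % m + 1 = m := le_antisymm (Nat.mod_lt k hm) hge
    have hdvd : m ∣ k + 1 :=
      ⟨k / m + 1, by linarith [Nat.mod_add_div k m]⟩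
    rw [if_pos hdvd, Nat.mod_eq_zero_of_dvd hdvd, hlast, zero_add]

theorem Nat.add_one_mod_eq_one_mod_iff {k m : ℕ} : (k + 1) % m = 1 % m ↔ m ∣ k :=
  ⟨fun h => Nat.modEq_zero_iff_dvd.mp (Nat.ModEq.add_right_cancel' (b := 0) 1 h),
    fun h => (Nat.modEq_zero_iff_dvd.mpr h).add_right 1⟩

theorem pow_mod_add_one {R : Type*} [CommRing R] (x : R) (k m : ℕ) :
    x * x ^ (k % m) = x ^ ((k + 1) % m) + if m ∣ k + 1 then x ^ m - 1 else 0 := by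
  have h := congrArg (x ^ ·) (Nat.mod_add_one_eq k m)
  simp only [pow_succ, pow_add] at h
  split_ifs at h ⊢ with hdvd
  · rw [Nat.mod_eq_zero_of_dvd hdvd] at h ⊢
    linear_combination h
  · linear_combination h

theorem mul_pow_sub_one_eq_of_recurrence {R : Type*} [CommRing R] {x : R} {m : ℕ} {b : ℕ → R}
    (h0 : b 0 = x) (hsucc : ∀ n, b (n + 1) = x * b n + if m ∣ n + 1 then x - 1 else 0)
    (n : ℕ) :
    b n * (x ^ m - 1) = x ^ (n + 1) * (x ^ m - 1) + (x - 1) * (x ^ n - x ^ (n % m)) := by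
  induction n with
  | zero => simp [h0]
  | succ k ih =>
    have hwrap := pow_mod_add_one x k m
    rw [hsucc]
    split_ifs at hwrap ⊢ <;> linear_combination x * ih + (1 - x) * hwrap

theorem stmt_10_general (p h : ℕ) (hp : 2 ≤ p) (a : ℕ → ℕ)
    (ha1 : a 1 = p)
    (haN : ∀ N, 1 < N →
      a N = if N % (h - 1) = 1 % (h - 1) then p * a (N - 1) + p - 1 else p * a (N - 1))
    (N r : ℕ) (hN : 1 ≤ N) (hr1 : 1 ≤ r) (hr2 : r ≤ h - 1) (hNr : N % (h - 1) = r % (h - 1)) :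
    (a N : ℤ) = (p : ℤ) ^ N +
      ((p : ℤ) - 1) * ((p : ℤ) ^ (N - 1) - (p : ℤ) ^ (r - 1)) / ((p : ℤ) ^ (h - 1) - 1) := by
  set m := h - 1
  have hrec (n : ℕ) :
      (a (n + 1 + 1) : ℤ) = p * a (n + 1) + if m ∣ n + 1 then (p : ℤ) - 1 else 0 := by
    simp only [haN (n + 1 + 1) (by omega), Nat.add_sub_cancel, Nat.add_one_mod_eq_one_mod_iff]
    split_ifs
    · push_cast [Nat.cast_sub (by nlinarith : 1 ≤ p * a (n + 1) + p)]
      ring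
    · simp
  have hclosed := mul_pow_sub_one_eq_of_recurrence (b := fun n => (a (n + 1) : ℤ))
    (by simp [ha1]) hrec (N - 1)
  have hmod : (N - 1) % m = r - 1 := by
    rw [← Nat.mod_eq_of_lt (by omega : r - 1 < m)]
    exact Nat.ModEq.add_right_cancel' 1 (by rwa [Nat.sub_add_cancel hN, Nat.sub_add_cancel hr1])
  have hden : (p : ℤ) ^ m - 1 ≠ 0 :=
    sub_ne_zero.mpr (one_lt_pow₀ (by exact_mod_cast hp) (by omega)).ne'
  simp only [Nat.sub_add_cancel hN, hmod] at hclosed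
  rw [Int.ediv_eq_of_eq_mul_left (c := (a N : ℤ) - p ^ N) hden (by linear_combination -hclosed)]
  ring

theorem stmt_10 (p h : ℕ) (hp : 2 ≤ p) (hh : 2 ≤ h) (a : ℕ → ℕ)
    (ha0 : a 0 = 1) (ha1 : a 1 = p)
    (haN : ∀ N, 1 < N →
      a N = if N % (h - 1) = 1 % (h - 1) then p * a (N - 1) + p - 1 else p * a (N - 1))
    (N r : ℕ) (hN : 1 ≤ N) (hr1 : 1 ≤ r) (hr2 : r ≤ h - 1) (hNr : N % (h - 1) = r % (h - 1)) :
    (a N : ℤ) = (p : ℤ) ^ N +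
      ((p : ℤ) - 1) * ((p : ℤ) ^ (N - 1) - (p : ℤ) ^ (r - 1)) / ((p : ℤ) ^ (h - 1) - 1) :=
  stmt_10_general p h hp a ha1 haN N r hN hr1 hr2 hNr
end

section
/- Let p ≥ 3, h ≥ 2, N ≥ 1 with a_{h,N} = p^N + (p-1)(p^{N-1} - p^{r-1})/(p^{h-1} - 1) where 1 ≤ r ≤ h-1 and N ≡ r (mod h-1), and |v_i| = 2(p^i - 1). Then -((p^N - 1)·|v_h|)/(p-1) + (a_{h,N} - 1)·|v_{h-1}| < 0; that is, the upper bound for contributing degrees in Proposition on MRW vanishing is strictly negative. -/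
/-!
Write `X = p^(h-1)`, `Y = p^N` and `c` for the fraction in `a_{h,N}`. Since `p^(r-1) ≥ 1`,
`(p-1)(p^(N-1) - p^(r-1)) ≤ Y - 1`, so `(X-1) c ≤ Y - 1` and the left side is at most `2X(Y-1)`.
On the right, `(pX - 1)/(p - 1) = X + (X - 1)/(p - 1) > X`, with enough room to survive the
rounding of integer division.
-/

theorem sub_one_mul_pow_sub_pow_le {R : Type*} [CommRing R] [LinearOrder R] [IsStrictOrderedRing R]
    {P : R} (hP : 1 ≤ P) (m n : ℕ) : (P - 1) * (P ^ m - P ^ n) ≤ P ^ (m + 1) - 1 := by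
  have hPm : 1 ≤ P ^ m := one_le_pow₀ hP
  have hPn : 1 ≤ P ^ n := one_le_pow₀ hP
  calc (P - 1) * (P ^ m - P ^ n) ≤ (P - 1) * (P ^ m - 1) := by gcongr
    _ ≤ P ^ (m + 1) - 1 := by rw [pow_succ]; nlinarith

theorem two_mul_mul_sub_one_lt_ediv {P X Y : ℤ} (hP : 2 ≤ P) (hX : P ≤ X) (hY : 2 ≤ Y) :
    2 * X * (Y - 1) < 2 * (Y - 1) * (P * X - 1) / (P - 1) := by
  rw [← Int.add_one_le_iff, Int.le_ediv_iff_mul_le (by omega)]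
  nlinarith

theorem stmt_12_general (p h N r : ℕ) (hp : 3 ≤ p) (hh : 2 ≤ h) (hN : 1 ≤ N) :
    (((p : ℤ) ^ N +
        ((p : ℤ) - 1) * ((p : ℤ) ^ (N - 1) - (p : ℤ) ^ (r - 1)) / ((p : ℤ) ^ (h - 1) - 1)) - 1) *
        (2 * ((p : ℤ) ^ (h - 1) - 1)) <
      2 * ((p : ℤ) ^ N - 1) * ((p : ℤ) ^ h - 1) / ((p : ℤ) - 1) := by
  have hP : (3 : ℤ) ≤ p := by exact_mod_cast hp
  set P : ℤ := (p : ℤ)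
  set X := P ^ (h - 1)
  set Y := P ^ N
  set c := (P - 1) * (P ^ (N - 1) - P ^ (r - 1)) / (X - 1)
  have hPX : P ≤ X := le_self_pow₀ (by omega) (by omega)
  have hY : P ≤ Y := le_self_pow₀ (by omega) (by omega)
  have hPh : P ^ h = P * X := by rw [← pow_succ', Nat.sub_add_cancel (by omega)]
  have hc : (X - 1) * c ≤ Y - 1 :=
    calc (X - 1) * c ≤ (P - 1) * (P ^ (N - 1) - P ^ (r - 1)) := by
          rw [mul_comm]; exact Int.ediv_mul_le _ (by omega)
      _ ≤ Y - 1 := by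
          simpa [Y, Nat.sub_add_cancel hN] using
            sub_one_mul_pow_sub_pow_le (by omega : (1 : ℤ) ≤ P) (N - 1) (r - 1)
  calc (Y + c - 1) * (2 * (X - 1)) ≤ 2 * X * (Y - 1) := by nlinarith
    _ < 2 * (Y - 1) * (P * X - 1) / (P - 1) := two_mul_mul_sub_one_lt_ediv (by omega) hPX (by omega)
    _ = 2 * (Y - 1) * (P ^ h - 1) / (P - 1) := by rw [hPh]

theorem stmt_12 (p h N r : ℕ) (hp : 3 ≤ p) (hh : 2 ≤ h) (hN : 1 ≤ N)
    (hr1 : 1 ≤ r) (hr2 : r ≤ h - 1) (hNr : N % (h - 1) = r % (h - 1)) :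
    (((p : ℤ) ^ N +
        ((p : ℤ) - 1) * ((p : ℤ) ^ (N - 1) - (p : ℤ) ^ (r - 1)) / ((p : ℤ) ^ (h - 1) - 1)) - 1) *
        (2 * ((p : ℤ) ^ (h - 1) - 1)) <
      2 * ((p : ℤ) ^ N - 1) * ((p : ℤ) ^ h - 1) / ((p : ℤ) - 1) :=
  stmt_12_general p h N r hp hh hN
end
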